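/- arXiv:2209.10912 — 4 statements merged into one kernel-verified Lean document; each statement's English description precedes it below -/
import Mathlib

section
/- For the fractional Chelyshkov polynomial defined by C̃_{N,n,ν}(x) = Σ_{j=n}^{N} (-1)^{j-n} C(N-n, j-n) C(N+j+1, N-n) x^{jν} with 0 < ν, the integral ∫_0^1 C̃_{N,n,ν}(x) x^{ν-1} dx equals 1/(ν(N+1)) for every n with 0 ≤ n ≤ N. -/
theorem lem1 (a M : ℕ) :
    ∑ i ∈ Finset.range (M+1), (-1:ℝ)^i * ((a+1).choose (M-i)) = (a.choose M : ℝ) := by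
  induction M with
  | zero => simp
  | succ M ih =>
    rw [Finset.sum_range_succ']
    have h1 : ∀ i ∈ Finset.range (M+1), (-1:ℝ)^(i+1) * ((a+1).choose (M+1-(i+1)))
        = -((-1:ℝ)^i * ((a+1).choose (M-i))) := by
      intro i hi
      have : M + 1 - (i+1) = M - i := Nat.succ_sub_succ M i
      rw [this]; ring
    rw [Finset.sum_congr rfl h1, Finset.sum_neg_distrib, ih]
    simp only [Nat.sub_zero, pow_zero, one_mul]
    have : (a+1).choose (M+1) = a.choose M + a.choose (M+1) := Nat.choose_succ_succ a M
    rw [this]; push_cast; ring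

theorem lem2 (n : ℕ) : ∀ M b : ℕ,
    ∑ i ∈ Finset.range (M+1), (-1:ℝ)^i * ((n+M+1+b).choose (M-i)) * ((n+i).choose i)
      = ((M+b).choose M : ℝ) := by
  induction n with
  | zero =>
    intro M b
    simp only [Nat.zero_add, Nat.choose_self]
    have := lem1 (M+b) M
    rw [show M+b+1 = M+1+b by ring] at this
    rw [← this]
    apply Finset.sum_congr rfl
    intro i hi
    simp [Nat.choose_self]
  | succ n ihn =>
    intro M
    induction M with
    | zero => intro b; simp
    | succ M ihM =>
      intro b
      -- split C(n+1+i, i) = C(n+i,i) + C(n+i, i-1) (i ≥ 1)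
      have split : ∀ i ∈ Finset.range (M+2),
          (-1:ℝ)^i * ((n+1+(M+1)+1+b).choose (M+1-i)) * ((n+1+i).choose i)
          = (-1:ℝ)^i * ((n+(M+1)+1+(b+1)).choose (M+1-i)) * ((n+i).choose i)
            + (if i = 0 then 0 else
                (-1:ℝ)^i * ((n+1+(M+1)+1+b).choose (M+1-i)) * ((n+i).choose (i-1))) := by
        intro i hi
        have harg : n+1+(M+1)+1+b = n+(M+1)+1+(b+1) := by ring
        cases i with
        | zero => simp [harg]
        | succ i =>
          simp only [if_neg (Nat.succ_ne_zero i), Nat.succ_sub_one]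
          have : (n+1+(i+1)).choose (i+1) = (n+(i+1)).choose i + (n+(i+1)).choose (i+1) := by
            rw [show n+1+(i+1) = (n+(i+1))+1 by ring]
            exact Nat.choose_succ_succ (n+(i+1)) i
          rw [this, harg]
          push_cast; ring
      rw [Finset.sum_congr rfl split, Finset.sum_add_distrib, ihn (M+1) (b+1)]
      have e2 : ∑ i ∈ Finset.range (M+2), (if i = 0 then 0 else
            (-1:ℝ)^i * ((n+1+(M+1)+1+b).choose (M+1-i)) * ((n+i).choose (i-1)))
          = -∑ i ∈ Finset.range (M+1),
              (-1:ℝ)^i * ((n+1+M+1+(b+1)).choose (M-i)) * ((n+1+i).choose i) := by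
        rw [Finset.sum_range_succ', (Finset.sum_neg_distrib _).symm]
        simp only [Nat.succ_ne_zero, if_neg, Nat.succ_sub_one, if_pos rfl, reduceIte, add_zero,
          Nat.succ_sub_succ, Nat.sub_zero]
        apply Finset.sum_congr rfl
        intro i hi
        have h1 : n+1+(M+1)+1+b = n+1+M+1+(b+1) := by ring
        have h2 : n+(i+1) = n+1+i := by ring
        rw [h1, h2]
        push_cast; ring
      rw [e2, ihM (b+1)]
      have p : (M+1+(b+1)).choose (M+1) = (M+(b+1)).choose M + (M+(b+1)).choose (M+1) := by
        rw [show M+1+(b+1) = (M+(b+1))+1 by ring]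
        exact Nat.choose_succ_succ _ _
      have q : (M+1+b).choose (M+1) = (M+(b+1)).choose (M+1) := by
        rw [show M+1+b = M+(b+1) by ring]
      rw [p, q]
      push_cast; ring


theorem lem3 (m : ℕ) : ∀ c : ℕ,
    ∑ l ∈ Finset.range (m+1), (-1:ℝ)^l * (m.choose l) / (c+1+l)
      = (m.factorial * c.factorial) / (c+1+m).factorial := by
  induction m with
  | zero =>
    intro c
    simp [Nat.factorial_succ]
    rw [show ((c:ℝ)+1)⁻¹ = 1/((c:ℝ)+1) by ring]
    rw [eq_div_iff (by positivity)]
    push_cast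
    field_simp
  | succ m ih =>
    intro c
    have split : ∀ l ∈ Finset.range (m+2), (-1:ℝ)^l * ((m+1).choose l) / (c+1+l)
        = (-1:ℝ)^l * (m.choose l) / (c+1+l)
          + (if l = 0 then 0 else (-1:ℝ)^l * (m.choose (l-1)) / (c+1+l)) := by
      intro l hl
      cases l with
      | zero => simp
      | succ l =>
        simp only [if_neg (Nat.succ_ne_zero l), Nat.succ_sub_one]
        rw [Nat.choose_succ_succ m l]
        push_cast; ring
    rw [Finset.sum_congr rfl split, Finset.sum_add_distrib]
    have e1 : ∑ l ∈ Finset.range (m+2), (-1:ℝ)^l * (m.choose l) / (c+1+l)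
        = ∑ l ∈ Finset.range (m+1), (-1:ℝ)^l * (m.choose l) / (c+1+l) := by
      rw [Finset.sum_range_succ, Nat.choose_succ_self]; simp
    have ih' : ∑ l ∈ Finset.range (m+1), (-1:ℝ)^l * (m.choose l) / ((c:ℝ)+1+1+l)
        = (m.factorial * (c+1).factorial) / ((c+1)+1+m).factorial := by
      have := ih (c+1)
      push_cast at this ⊢
      convert this using 2 with l
    have e2 : ∑ l ∈ Finset.range (m+2),
        (if l = 0 then 0 else (-1:ℝ)^l * (m.choose (l-1)) / (c+1+l))
        = -∑ l ∈ Finset.range (m+1), (-1:ℝ)^l * (m.choose l) / ((c:ℝ)+1+1+l) := by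
      rw [Finset.sum_range_succ', (Finset.sum_neg_distrib _).symm]
      simp only [Nat.succ_ne_zero, if_neg, Nat.succ_sub_one, if_pos rfl, reduceIte, add_zero]
      apply Finset.sum_congr rfl
      intro l hl
      push_cast; ring
    rw [e1, e2, ih c, ih']
    have hc1 : (c+1+(m+1)).factorial = (c+1+m).factorial * (c+1+m+1) := by
      rw [show c+1+(m+1) = (c+1+m)+1 by ring, Nat.factorial_succ]; ring
    have hcf : ((c+1)+1+m).factorial = (c+1+m).factorial * (c+1+m+1) := by
      rw [show (c+1)+1+m = (c+1+m)+1 by ring, Nat.factorial_succ]; ring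
    rw [hc1, hcf, Nat.factorial_succ (c), Nat.factorial_succ m]
    have hpos1 : ((c+1+m).factorial : ℝ) ≠ 0 := by positivity
    have hpos2 : ((c:ℝ)+1+m+1) ≠ 0 := by positivity
    push_cast
    field_simp
    ring

theorem key (N n : ℕ) (hn : n ≤ N) :
    ∑ j ∈ Finset.Icc n N, (-1:ℝ)^(j-n) * ((N-n).choose (j-n)) *
      ((N+j+1).choose (N-n)) / ((j:ℝ)+1) = 1/((N:ℝ)+1) := by
  obtain ⟨M, rfl⟩ := Nat.exists_eq_add_of_le hn
  -- reindex to range (M+1)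
  have hM : n + M - n = M := by omega
  rw [← Finset.Ico_add_one_right_eq_Icc, Finset.sum_Ico_eq_sum_range,
    show n + M + 1 - n = M + 1 by omega]
  have step1 : ∀ k ∈ Finset.range (M+1),
      (-1:ℝ)^(n+k-n) * ((n+M-n).choose (n+k-n)) * ((n+M+(n+k)+1).choose (n+M-n)) / (((n+k:ℕ):ℝ)+1)
      = ∑ i ∈ Finset.range (M+1),
          ((n+M+n+1).choose (M-i) : ℝ) * ((-1:ℝ)^k * (M.choose k) * (k.choose i) / ((n:ℝ)+k+1)) := by
    intro k hk
    have h1 : n + k - n = k := by omega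
    have h2 : n + M + (n+k) + 1 = k + (n+M+n+1) := by ring
    rw [h1, hM, h2, Nat.add_choose_eq, Finset.Nat.sum_antidiagonal_eq_sum_range_succ_mk]
    push_cast
    rw [Finset.mul_sum, Finset.sum_div]
    apply Finset.sum_congr rfl
    intro i hi
    push_cast
    ring
  rw [Finset.sum_congr rfl step1, Finset.sum_comm]
  -- inner sum over k for fixed i
  have inner : ∀ i ∈ Finset.range (M+1),
      ∑ k ∈ Finset.range (M+1),
        ((n+M+n+1).choose (M-i) : ℝ) * ((-1:ℝ)^k * (M.choose k) * (k.choose i) / ((n:ℝ)+k+1))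
      = ((n+M+n+1).choose (M-i) : ℝ) * ((-1:ℝ)^i * (M.choose i) *
          ((M-i).factorial * (n+i).factorial / (n+M+1).factorial)) := by
    intro i hi
    rw [Finset.mem_range] at hi
    have hiM : i ≤ M := by omega
    rw [← Finset.mul_sum]
    congr 1
    -- kill k < i terms
    have hsplit := Finset.sum_range_add_sum_Ico
      (fun k => (-1:ℝ)^k * (M.choose k) * (k.choose i) / ((n:ℝ)+k+1)) (by omega : i ≤ M+1)
    have hzero : ∑ k ∈ Finset.range i,
        (-1:ℝ)^k * (M.choose k) * (k.choose i) / ((n:ℝ)+k+1) = 0 := by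
      apply Finset.sum_eq_zero
      intro k hk
      rw [Finset.mem_range] at hk
      rw [Nat.choose_eq_zero_of_lt hk]
      simp
    rw [← hsplit, hzero, zero_add, Finset.sum_Ico_eq_sum_range,
      show M + 1 - i = (M - i) + 1 by omega]
    have term : ∀ l ∈ Finset.range ((M-i)+1),
        (-1:ℝ)^(i+l) * (M.choose (i+l)) * ((i+l).choose i) / ((n:ℝ)+((i+l:ℕ):ℝ)+1)
        = ((-1:ℝ)^i * (M.choose i)) * ((-1:ℝ)^l * ((M-i).choose l) / (((n+i:ℕ):ℝ)+1+l)) := by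
      intro l hl
      rw [Finset.mem_range] at hl
      have hle : i + l ≤ M := by omega
      have hmul : M.choose (i+l) * (i+l).choose i = M.choose i * (M-i).choose l := by
        have := Nat.choose_mul (n := M) (Nat.le_add_right i l)
        simpa using this
      have : ((M.choose (i+l)) : ℝ) * ((i+l).choose i) = (M.choose i : ℝ) * ((M-i).choose l) := by
        exact_mod_cast congrArg (Nat.cast : ℕ → ℝ) hmul
      rw [pow_add]
      push_cast
      rw [show ((-1:ℝ)^i * (-1:ℝ)^l * (M.choose (i+l):ℝ)) * ((i+l).choose i : ℝ)
        = (-1:ℝ)^i * (-1:ℝ)^l * ((M.choose (i+l):ℝ) * ((i+l).choose i:ℝ)) by ring, this]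
      push_cast
      ring
    rw [Finset.sum_congr rfl term, ← Finset.mul_sum, lem3 (M-i) (n+i),
      show n + i + 1 + (M - i) = n + M + 1 by omega]
  rw [Finset.sum_congr rfl inner]
  -- now apply lem2
  have coef : ∀ i ∈ Finset.range (M+1),
      ((n+M+n+1).choose (M-i) : ℝ) * ((-1:ℝ)^i * (M.choose i) *
          ((M-i).factorial * (n+i).factorial / (n+M+1).factorial))
      = ((M.factorial : ℝ) * n.factorial / (n+M+1).factorial) *
        ((-1:ℝ)^i * ((n+M+1+n).choose (M-i)) * ((n+i).choose i)) := by
    intro i hi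
    rw [Finset.mem_range] at hi
    have hiM : i ≤ M := by omega
    have hnat : M.choose i * (M-i).factorial * (n+i).factorial
        = M.factorial * n.factorial * (n+i).choose i := by
      have h1 : M.choose i * i.factorial * (M-i).factorial = M.factorial :=
        Nat.choose_mul_factorial_mul_factorial hiM
      have h2 : (n+i).choose i * i.factorial * n.factorial = (n+i).factorial := by
        have := Nat.choose_mul_factorial_mul_factorial (Nat.le_add_left i n)
        simpa using this
      calc M.choose i * (M-i).factorial * (n+i).factorial
          = M.choose i * (M-i).factorial * ((n+i).choose i * i.factorial * n.factorial) := by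
            rw [h2]
        _ = (M.choose i * i.factorial * (M-i).factorial) * n.factorial * (n+i).choose i := by
            ring
        _ = M.factorial * n.factorial * (n+i).choose i := by rw [h1]
    have hcast : (M.choose i : ℝ) * (M-i).factorial * (n+i).factorial
        = (M.factorial : ℝ) * n.factorial * ((n+i).choose i) := by
      exact_mod_cast congrArg (Nat.cast : ℕ → ℝ) hnat
    rw [show n+M+n+1 = n+M+1+n by ring]
    have hD : ((n+M+1).factorial : ℝ) ≠ 0 := by positivity
    linear_combination ((-1:ℝ)^i * (((n+M+1+n).choose (M-i)):ℝ) / ((n+M+1).factorial : ℝ)) * hcast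
  rw [Finset.sum_congr rfl coef, ← Finset.mul_sum, lem2 n M n]
  have hch : (M+n).choose M * M.factorial * n.factorial = (M+n).factorial := by
    have := Nat.choose_mul_factorial_mul_factorial (Nat.le_add_right M n)
    simpa using this
  have hcast : ((M+n).choose M : ℝ) * M.factorial * n.factorial = ((M+n).factorial : ℝ) := by
    exact_mod_cast congrArg (Nat.cast : ℕ → ℝ) hch
  have hfs : ((n+M+1).factorial : ℝ) = ((M+n).factorial : ℝ) * ((n:ℝ)+M+1) := by
    rw [show n+M+1 = (M+n)+1 by ring, Nat.factorial_succ]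
    push_cast; ring
  have h1 : ((M+n).factorial : ℝ) ≠ 0 := by positivity
  have h2 : ((n:ℝ)+M+1) ≠ 0 := by positivity
  rw [hfs]
  push_cast
  rw [div_mul_eq_mul_div, div_eq_div_iff (by positivity) h2]
  linear_combination ((n:ℝ)+M+1) * hcast

open MeasureTheory intervalIntegral

noncomputable def chel (N n : ℕ) (ν : ℝ) (x : ℝ) : ℝ :=
  ∑ j ∈ Finset.Icc n N, (-1 : ℝ) ^ (j - n) * ((N - n).choose (j - n)) *
    ((N + j + 1).choose (N - n)) * x ^ ((j : ℝ) * ν)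

theorem stmt_0 (N n : ℕ) (hn : n ≤ N) (ν : ℝ) (hν : 0 < ν) :
    ∫ x in (0:ℝ)..1, chel N n ν x * x ^ (ν - 1) = 1 / (ν * (N + 1)) := by
  have step1 : ∫ x in (0:ℝ)..1, chel N n ν x * x ^ (ν - 1)
      = ∫ x in (0:ℝ)..1, ∑ j ∈ Finset.Icc n N,
          ((-1:ℝ)^(j-n) * ((N-n).choose (j-n)) * ((N+j+1).choose (N-n)))
            * x ^ ((j:ℝ)*ν + (ν-1)) := by
    apply intervalIntegral.integral_congr_ae
    filter_upwards with x hx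
    rw [Set.uIoc_of_le (by norm_num : (0:ℝ) ≤ 1)] at hx
    have hx0 : 0 < x := hx.1
    unfold chel
    rw [Finset.sum_mul]
    apply Finset.sum_congr rfl
    intro j hj
    rw [Real.rpow_add hx0]
    ring
  rw [step1]
  rw [intervalIntegral.integral_finset_sum]
  swap
  · intro j hj
    apply IntervalIntegrable.const_mul
    apply intervalIntegral.intervalIntegrable_rpow'
    have : (0:ℝ) ≤ (j:ℝ)*ν := by positivity
    linarith
  have step3 : ∀ j ∈ Finset.Icc n N,
      ∫ x in (0:ℝ)..1, ((-1:ℝ)^(j-n) * ((N-n).choose (j-n)) * ((N+j+1).choose (N-n)))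
          * x ^ ((j:ℝ)*ν + (ν-1))
      = (1/ν) * ((-1:ℝ)^(j-n) * ((N-n).choose (j-n)) * ((N+j+1).choose (N-n)) / ((j:ℝ)+1)) := by
    intro j hj
    rw [intervalIntegral.integral_const_mul]
    have hr : (-1:ℝ) < (j:ℝ)*ν + (ν-1) := by
      have : (0:ℝ) ≤ (j:ℝ)*ν := by positivity
      linarith
    rw [integral_rpow (Or.inl hr)]
    have he : (j:ℝ)*ν + (ν-1) + 1 = ((j:ℝ)+1)*ν := by ring
    have hne : (j:ℝ)*ν + (ν-1) + 1 ≠ 0 := by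
      rw [he]; positivity
    rw [Real.one_rpow, Real.zero_rpow hne, he]
    have hj1 : ((j:ℝ)+1) ≠ 0 := by positivity
    field_simp
    simp
  rw [Finset.sum_congr rfl step3, ← Finset.mul_sum, key N n hn]
  rw [div_mul_div_comm]
  norm_num
end

section
/- The fractional Chelyshkov polynomials are orthogonal on [0,1] with respect to the weight x^{ν-1}: for 0 ≤ p, q ≤ N, ∫_0^1 C̃_{N,p,ν}(x) C̃_{N,q,ν}(x) x^{ν-1} dx = 0 if p ≠ q, and equals 1/(ν(2p+1)) if p = q. -/
open MeasureTheory intervalIntegral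

open Finset

lemma step (M : ℕ) (x : ℝ) (w : ℕ → ℝ) :
    ∑ i ∈ range (M+2), (-1:ℝ)^i * ((M+1).choose i) * (∏ t ∈ range (M+1), (x + i - t)) * w i
      = ∑ i ∈ range (M+1), (-1:ℝ)^i * (M.choose i) * (∏ t ∈ range M, (x + i - t)) *
          ((x + i - M) * w i - (x + 1 + i) * w (i+1)) := by
  have hA : ∑ i ∈ range (M+2), (-1:ℝ)^i * (M.choose i) * (∏ t ∈ range (M+1), (x + i - t)) * w i
      = ∑ i ∈ range (M+1), (-1:ℝ)^i * (M.choose i) * (∏ t ∈ range M, (x + i - t)) * ((x + i - M) * w i) := by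
    rw [Finset.sum_range_succ, Nat.choose_succ_self]
    simp only [Nat.cast_zero, mul_zero, zero_mul, mul_zero, add_zero]
    apply Finset.sum_congr rfl; intro i _
    rw [Finset.prod_range_succ]; push_cast; ring
  have hB : ∑ i ∈ range (M+2), ((-1:ℝ)^i * ((M+1).choose i) - (-1:ℝ)^i * (M.choose i)) * (∏ t ∈ range (M+1), (x + i - t)) * w i
      = ∑ i ∈ range (M+1), (-1:ℝ)^i * (M.choose i) * (∏ t ∈ range M, (x + i - t)) * (-((x + 1 + i) * w (i+1))) := by
    rw [Finset.sum_range_succ']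
    simp only [Nat.choose_zero_right, Nat.cast_one, pow_zero, one_mul, sub_self, zero_mul,
      add_zero]
    apply Finset.sum_congr rfl; intro i _
    have hc : ((M+1).choose (i+1) : ℝ) - (M.choose (i+1) : ℝ) = M.choose i := by
      rw [Nat.choose_succ_succ]; push_cast; ring
    have hp : ∏ t ∈ range (M+1), (x + (i+1:ℕ) - t) = (x + 1 + i) * ∏ t ∈ range M, (x + i - t) := by
      rw [Finset.prod_range_succ']
      push_cast
      rw [mul_comm]
      congr 1
      · ring
      apply Finset.prod_congr rfl; intro t _; ring
    rw [hp]
    push_cast [Nat.choose_succ_succ]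
    ring
  calc ∑ i ∈ range (M+2), (-1:ℝ)^i * ((M+1).choose i) * (∏ t ∈ range (M+1), (x + i - t)) * w i
      = (∑ i ∈ range (M+2), (-1:ℝ)^i * (M.choose i) * (∏ t ∈ range (M+1), (x + i - t)) * w i)
        + ∑ i ∈ range (M+2), ((-1:ℝ)^i * ((M+1).choose i) - (-1:ℝ)^i * (M.choose i)) * (∏ t ∈ range (M+1), (x + i - t)) * w i := by
        rw [← Finset.sum_add_distrib]; apply Finset.sum_congr rfl; intro i _; ring
    _ = _ := by
        rw [hA, hB, ← Finset.sum_add_distrib]; apply Finset.sum_congr rfl; intro i _; ring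

lemma key_s1 (M : ℕ) : ∀ x b : ℝ, (∀ i : ℕ, i ≤ M → b + i ≠ 0) →
    ∑ i ∈ range (M+1), (-1:ℝ)^i * (M.choose i) * (∏ t ∈ range M, (x + i - t)) * (b + i)⁻¹
      = M.factorial * (∏ t ∈ range M, (x - b - t)) / ∏ i ∈ range (M+1), (b + i) := by
  induction M with
  | zero =>
    intro x b hb
    simp [one_div]
  | succ M ih =>
    intro x b hb
    have hb0 : ∀ i : ℕ, i ≤ M → b + i ≠ 0 := fun i hi => hb i (hi.trans (Nat.le_succ M))
    have hb1 : ∀ i : ℕ, i ≤ M → (b + 1) + i ≠ 0 := by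
      intro i hi h
      have h2 := hb (i+1) (Nat.succ_le_succ hi)
      apply h2; push_cast; linarith
    have hstep := step M x (fun i => (b + i)⁻¹)
    rw [hstep]
    have hpt : ∀ i ∈ range (M+1),
        (-1:ℝ)^i * (M.choose i) * (∏ t ∈ range M, (x + i - t)) *
          ((x + i - M) * (b + i)⁻¹ - (x + 1 + i) * (b + (i+1:ℕ))⁻¹)
        = (x - b - M) * ((-1:ℝ)^i * (M.choose i) * (∏ t ∈ range M, (x + i - t)) * (b + i)⁻¹)
          - (x - b) * ((-1:ℝ)^i * (M.choose i) * (∏ t ∈ range M, (x + i - t)) * ((b+1) + i)⁻¹) := by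
      intro i hi
      have h1 : b + (i:ℝ) ≠ 0 := hb0 i (by simpa [Nat.lt_succ_iff] using hi)
      have h2 : (b+1) + (i:ℝ) ≠ 0 := hb1 i (by simpa [Nat.lt_succ_iff] using hi)
      have h2' : b + ((i:ℝ)+1) ≠ 0 := by intro h; apply h2; linarith
      push_cast
      field_simp
      ring
    rw [Finset.sum_congr rfl hpt, Finset.sum_sub_distrib, ← Finset.mul_sum, ← Finset.mul_sum,
      ih x b hb0, ih x (b+1) hb1]
    -- now pure algebra
    set P1 := ∏ t ∈ range M, (x - b - t) with hP1
    set Q := ∏ t ∈ range M, (x - (b+1) - t) with hQ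
    set D1 := ∏ i ∈ range (M+1), (b + i) with hD1
    set D2 := ∏ i ∈ range (M+1), ((b+1) + i) with hD2
    have hD1ne : D1 ≠ 0 := by
      rw [hD1]; apply Finset.prod_ne_zero_iff.2; intro i hi
      exact hb0 i (by simpa [Nat.lt_succ_iff] using hi)
    have hD2ne : D2 ≠ 0 := by
      rw [hD2]; apply Finset.prod_ne_zero_iff.2; intro i hi
      exact hb1 i (by simpa [Nat.lt_succ_iff] using hi)
    have e1 : ∏ t ∈ range (M+1), (x - b - t) = (x - b - M) * P1 := by
      rw [Finset.prod_range_succ, mul_comm]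
    have e2 : ∏ t ∈ range (M+1), (x - b - t) = (x - b) * Q := by
      rw [Finset.prod_range_succ', hQ, mul_comm]
      congr 1
      · push_cast; ring
      apply Finset.prod_congr rfl; intro t _; push_cast; ring
    have f4 : ∏ i ∈ range (M+2), (b + i) = D1 * (b + M + 1) := by
      rw [Finset.prod_range_succ, hD1]; push_cast; ring
    have f3 : ∏ i ∈ range (M+2), (b + i) = b * D2 := by
      rw [Finset.prod_range_succ', hD2]
      rw [mul_comm]
      congr 1
      · push_cast; ring
      apply Finset.prod_congr rfl; intro t _; push_cast; ring
    have f5 : b * D2 = D1 * (b + M + 1) := by rw [← f3, f4]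
    rw [e1, f4] -- RHS now uses P1 and D1*(b+M+1)
    have hbne : b + (M:ℝ) + 1 ≠ 0 := by
      have := hb (M+1) le_rfl; push_cast at this; intro h; apply this; linarith
    have hfact : ((M+1).factorial : ℝ) = (M+1) * M.factorial := by
      rw [Nat.factorial_succ]; push_cast; ring
    push_cast [hfact]
    field_simp
    have e12 : (x - b - (M:ℝ)) * P1 = (x - b) * Q := e1.symm.trans e2
    linear_combination (D1 * (b + M + 1)) * e12 +
      ((x - b - M) * P1) * f5

lemma cast_choose_prod (n M : ℕ) (h : M ≤ n) :
    ((n.choose M : ℝ)) * M.factorial = ∏ t ∈ range M, ((n:ℝ) - t) := by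
  have h1 : n.descFactorial M = M.factorial * n.choose M :=
    Nat.descFactorial_eq_factorial_mul_choose n M
  have h2 : ((n.descFactorial M : ℕ) : ℝ) = ∏ t ∈ range M, ((n:ℝ) - t) := by
    rw [Nat.descFactorial_eq_prod_range, Nat.cast_prod]
    apply Finset.prod_congr rfl
    intro t ht
    rw [Nat.cast_sub (le_trans (le_of_lt (mem_range.1 ht)) h)]
  rw [← h2, h1]; push_cast; ring

lemma chelInnerSum (N q : ℕ) (hq : q ≤ N) (j : ℕ) :
    ∑ k ∈ Finset.Icc q N,
        (-1:ℝ)^(k-q) * ((N-q).choose (k-q)) * ((N+k+1).choose (N-q)) * ((j:ℝ)+k+1)⁻¹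
      = (∏ t ∈ range (N-q), ((N:ℝ) - j - t)) / ∏ i ∈ range (N-q+1), ((j:ℝ)+q+1+i) := by
  set M := N - q with hM
  have hNq : N + 1 - q = M + 1 := by omega
  rw [← Finset.Ico_add_one_right_eq_Icc, Finset.sum_Ico_eq_sum_range, hNq]
  set x : ℝ := (N:ℝ) + q + 1 with hx
  set b : ℝ := (j:ℝ) + q + 1 with hb
  have hbne : ∀ i : ℕ, i ≤ M → b + i ≠ 0 := by
    intro i _; rw [hb]; positivity
  have hkey := key_s1 M x b hbne
  have hterm : ∀ i ∈ range (M+1),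
      (-1:ℝ)^(q+i-q) * ((N-q).choose (q+i-q)) * ((N+(q+i)+1).choose (N-q)) * ((j:ℝ)+(q+i)+1)⁻¹
        * M.factorial
      = (-1:ℝ)^i * (M.choose i) * (∏ t ∈ range M, (x + i - t)) * (b + i)⁻¹ := by
    intro i _
    have h1 : q + i - q = i := by omega
    have h2 : ((N+(q+i)+1).choose (N-q) : ℝ) * M.factorial
        = ∏ t ∈ range M, (x + i - t) := by
      rw [cast_choose_prod _ _ (by omega)]
      apply Finset.prod_congr rfl
      intro t _
      rw [hx]; push_cast; ring
    rw [h1, ← hM, ← h2]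
    have h3 : ((j:ℝ) + ((q:ℝ) + (i:ℝ)) + 1) = b + i := by rw [hb]; ring
    push_cast
    rw [h3]; ring
  have hMne : (M.factorial : ℝ) ≠ 0 := by positivity
  have hsum : (∑ i ∈ range (M+1),
      (-1:ℝ)^(q+i-q) * ((N-q).choose (q+i-q)) * ((N+(q+i)+1).choose (N-q)) * ((j:ℝ)+(q+i)+1)⁻¹)
      * M.factorial
      = M.factorial * (∏ t ∈ range M, (x - b - t)) / ∏ i ∈ range (M+1), (b + i) := by
    rw [Finset.sum_mul, Finset.sum_congr rfl hterm, hkey]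
  have hprodeq : ∏ t ∈ range M, (x - b - t) = ∏ t ∈ range M, ((N:ℝ) - j - t) := by
    apply Finset.prod_congr rfl; intro t _; rw [hx, hb]; ring
  have hden : ∏ i ∈ range (M+1), (b + i) = ∏ i ∈ range (M+1), ((j:ℝ)+q+1+i) := by
    apply Finset.prod_congr rfl; intro i _; rw [hb]
  rw [hprodeq, hden] at hsum
  push_cast at hsum ⊢
  apply mul_right_cancel₀ hMne
  rw [hsum]; ring

lemma chelInner_zero (N q j : ℕ) (hqj : q < j) (hjN : j ≤ N) :
    ∑ k ∈ Finset.Icc q N,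
        (-1:ℝ)^(k-q) * ((N-q).choose (k-q)) * ((N+k+1).choose (N-q)) * ((j:ℝ)+k+1)⁻¹ = 0 := by
  rw [chelInnerSum N q (le_of_lt (lt_of_lt_of_le hqj hjN)) j]
  rw [div_eq_zero_iff]
  left
  apply Finset.prod_eq_zero (i := N - j)
  · exact mem_range.2 (by omega)
  · rw [Nat.cast_sub hjN]; ring

lemma fact_prod (n : ℕ) : ∀ k : ℕ, (n.factorial : ℝ) * ∏ i ∈ range k, ((n:ℝ)+1+i) = (n+k).factorial := by
  intro k
  induction k with
  | zero => simp
  | succ k ih =>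
    rw [Finset.prod_range_succ, ← mul_assoc, ih]
    have : n + (k+1) = (n + k) + 1 := by omega
    rw [this, Nat.factorial_succ]
    push_cast; ring

lemma chelInner_diag (N p : ℕ) (hp : p ≤ N) :
    ∑ k ∈ Finset.Icc p N,
        (-1:ℝ)^(k-p) * ((N-p).choose (k-p)) * ((N+k+1).choose (N-p)) * ((p:ℝ)+k+1)⁻¹
      = ((N-p).factorial : ℝ) * (2*p).factorial / (N+p+1).factorial := by
  rw [chelInnerSum N p hp p]
  set M := N - p with hM
  have hnum : ∏ t ∈ range M, ((N:ℝ) - p - t) = M.factorial := by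
    have h1 : ((M.choose M : ℝ)) * M.factorial = ∏ t ∈ range M, ((M:ℝ) - t) :=
      cast_choose_prod M M le_rfl
    rw [Nat.choose_self, Nat.cast_one, one_mul] at h1
    rw [h1]
    apply Finset.prod_congr rfl
    intro t _
    rw [hM, Nat.cast_sub hp]
  have hden : ((2*p).factorial : ℝ) * ∏ i ∈ range (M+1), ((p:ℝ)+p+1+i) = (N+p+1).factorial := by
    have h4 : 2*p + (M+1) = N+p+1 := by omega
    rw [← h4, ← fact_prod (2*p) (M+1)]
    congr 1
    apply Finset.prod_congr rfl
    intro i _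
    push_cast; ring
  rw [hnum]
  have hden2 : ((2*p).factorial : ℝ) ≠ 0 := by positivity
  have hdenne : (∏ i ∈ range (M+1), ((p:ℝ)+p+1+i)) ≠ 0 := by
    apply Finset.prod_ne_zero_iff.2; intro i _; positivity
  have hfa : ((N+p+1).factorial : ℝ) ≠ 0 := by positivity
  rw [div_eq_div_iff hdenne hfa]
  calc (M.factorial : ℝ) * (N+p+1).factorial
      = M.factorial * ((2*p).factorial * ∏ i ∈ range (M+1), ((p:ℝ)+p+1+i)) := by rw [hden]
    _ = ↑M.factorial * ↑(2 * p).factorial * ∏ i ∈ range (M + 1), (↑p + ↑p + 1 + ↑i) := by ring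

lemma chelCombo_le (N p q : ℕ) (hp : p ≤ N) (hq : q ≤ p) :
    ∑ j ∈ Finset.Icc p N, ∑ k ∈ Finset.Icc q N,
      ((-1:ℝ)^(j-p) * ((N-p).choose (j-p)) * ((N+j+1).choose (N-p))) *
      ((-1:ℝ)^(k-q) * ((N-q).choose (k-q)) * ((N+k+1).choose (N-q))) * ((j:ℝ)+(k:ℝ)+1)⁻¹
    = if p = q then (2*(p:ℝ)+1)⁻¹ else 0 := by
  have hinner : ∀ j : ℕ, ∑ k ∈ Finset.Icc q N,
      ((-1:ℝ)^(j-p) * ((N-p).choose (j-p)) * ((N+j+1).choose (N-p))) *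
      ((-1:ℝ)^(k-q) * ((N-q).choose (k-q)) * ((N+k+1).choose (N-q))) * ((j:ℝ)+(k:ℝ)+1)⁻¹
      = ((-1:ℝ)^(j-p) * ((N-p).choose (j-p)) * ((N+j+1).choose (N-p))) *
        ∑ k ∈ Finset.Icc q N,
          (-1:ℝ)^(k-q) * ((N-q).choose (k-q)) * ((N+k+1).choose (N-q)) * ((j:ℝ)+(k:ℝ)+1)⁻¹ := by
    intro j
    rw [Finset.mul_sum]
    apply Finset.sum_congr rfl
    intro k _
    ring
  by_cases hpq : p = q
  · subst hpq
    rw [if_pos rfl]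
    rw [Finset.sum_eq_single_of_mem p (Finset.mem_Icc.2 ⟨le_rfl, hp⟩)]
    · rw [hinner p, chelInner_diag N p hp]
      simp only [Nat.sub_self, pow_zero, Nat.choose_zero_right, Nat.cast_one, one_mul, mul_one]
      have hc : ((N+p+1).choose (N-p) : ℝ) =
          ((N+p+1).factorial : ℝ) / ((N-p).factorial * (2*p+1).factorial) := by
        rw [Nat.cast_choose ℝ (by omega : N - p ≤ N + p + 1),
          (by omega : N + p + 1 - (N - p) = 2*p+1)]
      rw [hc]
      have h1 : ((N-p).factorial : ℝ) ≠ 0 := by positivity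
      have h2 : ((2*p+1).factorial : ℝ) ≠ 0 := by positivity
      have h3 : ((N+p+1).factorial : ℝ) ≠ 0 := by positivity
      have h4 : ((2*p).factorial : ℝ) ≠ 0 := by positivity
      have h5 : ((2*p+1).factorial : ℝ) = (2*(p:ℝ)+1) * (2*p).factorial := by
        rw [Nat.factorial_succ]; push_cast; ring
      have h6 : (2*(p:ℝ)+1) ≠ 0 := by positivity
      rw [h5]
      field_simp
    · intro j hj hjne
      rw [hinner j, chelInner_zero N p j (by
          rcases Finset.mem_Icc.1 hj with ⟨h1, _⟩; omega)
        (Finset.mem_Icc.1 hj).2, mul_zero]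
  · rw [if_neg hpq]
    apply Finset.sum_eq_zero
    intro j hj
    rw [hinner j, chelInner_zero N q j (by
        rcases Finset.mem_Icc.1 hj with ⟨h1, _⟩; omega)
      (Finset.mem_Icc.1 hj).2, mul_zero]

lemma chelCombo (N p q : ℕ) (hp : p ≤ N) (hq : q ≤ N) :
    ∑ j ∈ Finset.Icc p N, ∑ k ∈ Finset.Icc q N,
      ((-1:ℝ)^(j-p) * ((N-p).choose (j-p)) * ((N+j+1).choose (N-p))) *
      ((-1:ℝ)^(k-q) * ((N-q).choose (k-q)) * ((N+k+1).choose (N-q))) * ((j:ℝ)+(k:ℝ)+1)⁻¹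
    = if p = q then (2*(p:ℝ)+1)⁻¹ else 0 := by
  rcases le_or_gt q p with h | h
  · exact chelCombo_le N p q hp h
  · rw [Finset.sum_comm]
    have := chelCombo_le N q p hq (le_of_lt h)
    rw [if_neg (by omega)] at this ⊢
    rw [← this]
    apply Finset.sum_congr rfl; intro k _
    apply Finset.sum_congr rfl; intro j _
    ring

lemma myIntegrable_sum {ι : Type*} (s : Finset ι) {f : ι → ℝ → ℝ} {u v : ℝ}
    (h : ∀ i ∈ s, IntervalIntegrable (f i) volume u v) :
    IntervalIntegrable (fun x => ∑ i ∈ s, f i x) volume u v := by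
  have h2 := IntervalIntegrable.sum s h
  have : (∑ i ∈ s, f i) = fun x => ∑ i ∈ s, f i x := by
    ext x; simp [Finset.sum_apply]
  rwa [this] at h2

theorem stmt_1 (N p q : ℕ) (hp : p ≤ N) (hq : q ≤ N) (ν : ℝ) (hν : 0 < ν) :
    ∫ x in (0:ℝ)..1, chel N p ν x * chel N q ν x * x ^ (ν - 1) =
      if p = q then 1 / (ν * (2 * p + 1)) else 0 := by
  set a : ℕ → ℕ → ℝ := fun n j => (-1:ℝ)^(j-n) * ((N-n).choose (j-n)) * ((N+j+1).choose (N-n))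
    with ha
  have hstep1 : ∫ x in (0:ℝ)..1, chel N p ν x * chel N q ν x * x ^ (ν - 1)
      = ∫ x in (0:ℝ)..1, ∑ j ∈ Finset.Icc p N, ∑ k ∈ Finset.Icc q N,
          (a p j * a q k) * x ^ (((j:ℝ)+(k:ℝ)+1) * ν - 1) := by
    apply intervalIntegral.integral_congr_ae
    filter_upwards with x hx
    rw [Set.uIoc_of_le (by norm_num : (0:ℝ) ≤ 1)] at hx
    have hx0 : 0 < x := hx.1
    unfold chel
    rw [Finset.sum_mul_sum, Finset.sum_mul]
    apply Finset.sum_congr rfl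
    intro j _
    rw [Finset.sum_mul]
    apply Finset.sum_congr rfl
    intro k _
    have hr : x ^ ((j:ℝ)*ν) * x ^ ((k:ℝ)*ν) * x ^ (ν-1) = x ^ (((j:ℝ)+(k:ℝ)+1) * ν - 1) := by
      rw [← Real.rpow_add hx0, ← Real.rpow_add hx0]
      congr 1
      ring
    simp only [ha]
    rw [← hr]
    ring
  have hint : ∀ (c : ℝ) (e : ℝ), -1 < e →
      IntervalIntegrable (fun x : ℝ => c * x ^ e) volume 0 1 := by
    intro c e he
    exact (intervalIntegrable_rpow' he).const_mul c
  have he : ∀ j k : ℕ, (-1:ℝ) < ((j:ℝ)+(k:ℝ)+1) * ν - 1 := by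
    intro j k
    have : 0 < ((j:ℝ)+(k:ℝ)+1) * ν := by positivity
    linarith
  rw [hstep1, intervalIntegral.integral_finset_sum]
  swap
  · intro j _
    exact myIntegrable_sum _ (fun k _ => hint _ _ (he j k))
  have hstep2 : ∀ j ∈ Finset.Icc p N,
      (∫ x in (0:ℝ)..1, ∑ k ∈ Finset.Icc q N, (a p j * a q k) * x ^ (((j:ℝ)+(k:ℝ)+1) * ν - 1))
      = ∑ k ∈ Finset.Icc q N, (a p j * a q k) * (((j:ℝ)+(k:ℝ)+1) * ν)⁻¹ := by
    intro j _
    rw [intervalIntegral.integral_finset_sum (fun k _ => hint _ _ (he j k))]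
    apply Finset.sum_congr rfl
    intro k _
    have hν2 : 0 < ((j:ℝ)+(k:ℝ)+1) * ν := by positivity
    rw [intervalIntegral.integral_const_mul, integral_rpow (Or.inl (he j k))]
    rw [Real.one_rpow, Real.zero_rpow (by linarith : ((j:ℝ)+(k:ℝ)+1) * ν - 1 + 1 ≠ 0)]
    have : ((j:ℝ)+(k:ℝ)+1) * ν - 1 + 1 = ((j:ℝ)+(k:ℝ)+1) * ν := by ring
    rw [this]
    ring
  rw [Finset.sum_congr rfl hstep2]
  have hfinal : ∑ j ∈ Finset.Icc p N, ∑ k ∈ Finset.Icc q N,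
      (a p j * a q k) * (((j:ℝ)+(k:ℝ)+1) * ν)⁻¹
      = (∑ j ∈ Finset.Icc p N, ∑ k ∈ Finset.Icc q N,
          a p j * a q k * ((j:ℝ)+(k:ℝ)+1)⁻¹) * ν⁻¹ := by
    rw [Finset.sum_mul]
    apply Finset.sum_congr rfl
    intro j _
    rw [Finset.sum_mul]
    apply Finset.sum_congr rfl
    intro k _
    rw [mul_inv]
    ring
  rw [hfinal]
  have := chelCombo N p q hp hq
  have hcombo : ∑ j ∈ Finset.Icc p N, ∑ k ∈ Finset.Icc q N,
      a p j * a q k * ((j:ℝ)+(k:ℝ)+1)⁻¹ = if p = q then (2*(p:ℝ)+1)⁻¹ else 0 := by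
    rw [← this]
  rw [hcombo]
  by_cases hpq : p = q
  · rw [if_pos hpq, if_pos hpq, one_div, mul_inv]
    ring
  · rw [if_neg hpq, if_neg hpq, zero_mul]
end

section
/- Suppose k ∈ C([0,1]×[0,1]), g̃ ∈ C([0,1]), f ∈ C([0,1]×ℝ) satisfies |f(x,y₂) - f(x,y₁)| ≤ L_f |y₂ - y₁|, let M_k = max_{x,t∈[0,1]} |k(x,t)|, and assume L_f · M_k < Γ(α+1) with 0 < α < 1. Then the integral equation y(x) = g̃(x) + ∫_0^x (x-t)^{α-1} (1/Γ(α)) (∫_0^1 k(t,z) f(z, y(z)) dz) dt has a unique continuous solution y on [0,1]. -/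
open MeasureTheory intervalIntegral Set Filter


lemma frac_intable {α : ℝ} (hα : 0 < α) {h : ℝ → ℝ} (hh : Continuous h)
    (x a b : ℝ) : IntervalIntegrable (fun t => (x - t) ^ (α - 1) * h t) volume a b := by
  have h1 : IntervalIntegrable (fun s : ℝ => s ^ (α - 1)) volume (x - a) (x - b) :=
    intervalIntegrable_rpow' (by linarith)
  have h2 := h1.comp_sub_left x
  simp only [sub_sub_cancel] at h2
  exact h2.mul_continuousOn hh.continuousOn

lemma frac_const_int {α : ℝ} (hα : 0 < α) (a b c : ℝ) :
    (∫ t in a..b, (c - t) ^ (α - 1)) = ((c - a) ^ α - (c - b) ^ α) / α := by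
  rw [intervalIntegral.integral_comp_sub_left (fun s => s ^ (α - 1)) c,
      integral_rpow (Or.inl (by linarith))]
  rw [sub_add_cancel]

lemma frac_bound {α : ℝ} (hα : 0 < α) {h : ℝ → ℝ} (hh : Continuous h)
    {M : ℝ} (hM : ∀ t, |h t| ≤ M) {x1 x2 : ℝ} (hx : x1 ≤ x2) :
    |∫ t in x1..x2, (x2 - t) ^ (α - 1) * h t| ≤ M * (x2 - x1) ^ α / α := by
  have hM0 : 0 ≤ M := le_trans (abs_nonneg _) (hM 0)
  have hint : IntervalIntegrable (fun t => (x2 - t) ^ (α - 1) * M) volume x1 x2 :=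
    frac_intable hα continuous_const x2 x1 x2
  have key : ‖∫ t in x1..x2, (x2 - t) ^ (α - 1) * h t‖ ≤
      |∫ t in x1..x2, (x2 - t) ^ (α - 1) * M| := by
    apply intervalIntegral.norm_integral_le_abs_of_norm_le _ hint
    filter_upwards [ae_restrict_mem measurableSet_uIoc] with t ht
    have ht2 : t ≤ x2 := (Set.uIoc_of_le hx ▸ ht).2
    have hnn : (0:ℝ) ≤ (x2 - t) ^ (α - 1) := Real.rpow_nonneg (by linarith) _
    rw [Real.norm_eq_abs, abs_mul, abs_of_nonneg hnn]
    exact mul_le_mul_of_nonneg_left (hM t) hnn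
  have hval : (∫ t in x1..x2, (x2 - t) ^ (α - 1) * M) = M * (x2 - x1) ^ α / α := by
    rw [intervalIntegral.integral_mul_const, frac_const_int hα, sub_self,
      Real.zero_rpow hα.ne', sub_zero]
    ring
  rw [Real.norm_eq_abs] at key
  calc |∫ t in x1..x2, (x2 - t) ^ (α - 1) * h t| ≤ _ := key
    _ = M * (x2 - x1) ^ α / α := by
        rw [hval, abs_of_nonneg]
        exact div_nonneg (mul_nonneg hM0 (Real.rpow_nonneg (by linarith) _)) hα.le

lemma frac_intable' {α : ℝ} (hα : 0 < α) (x a b : ℝ) :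
    IntervalIntegrable (fun t => (x - t) ^ (α - 1)) volume a b := by
  have h1 : IntervalIntegrable (fun s : ℝ => s ^ (α - 1)) volume (x - a) (x - b) :=
    intervalIntegrable_rpow' (by linarith)
  have h2 := h1.comp_sub_left x
  simpa only [sub_sub_cancel] using h2

lemma frac_holder {α : ℝ} (hα : 0 < α) (hα1 : α < 1) {h : ℝ → ℝ} (hh : Continuous h)
    {M : ℝ} (hM : ∀ t, |h t| ≤ M) {x1 x2 : ℝ} (h0 : 0 ≤ x1) (h12 : x1 ≤ x2) :
    |(∫ t in (0:ℝ)..x2, (x2 - t) ^ (α - 1) * h t) -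
      ∫ t in (0:ℝ)..x1, (x1 - t) ^ (α - 1) * h t| ≤ 2 * M / α * (x2 - x1) ^ α := by
  have hM0 : 0 ≤ M := le_trans (abs_nonneg _) (hM 0)
  have i1 := frac_intable hα hh x2 0 x1
  have i2 := frac_intable hα hh x2 x1 x2
  have i3 := frac_intable hα hh x1 0 x1
  have hsplit : (∫ t in (0:ℝ)..x2, (x2 - t) ^ (α - 1) * h t) =
      (∫ t in (0:ℝ)..x1, (x2 - t) ^ (α - 1) * h t) +
      ∫ t in x1..x2, (x2 - t) ^ (α - 1) * h t :=
    (intervalIntegral.integral_add_adjacent_intervals i1 i2).symm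
  have hdiff : (∫ t in (0:ℝ)..x1, (x2 - t) ^ (α - 1) * h t) -
      (∫ t in (0:ℝ)..x1, (x1 - t) ^ (α - 1) * h t) =
      ∫ t in (0:ℝ)..x1, ((x2 - t) ^ (α - 1) - (x1 - t) ^ (α - 1)) * h t := by
    rw [← intervalIntegral.integral_sub i1 i3]
    congr 1; ext t; ring
  have hmid : |∫ t in x1..x2, (x2 - t) ^ (α - 1) * h t| ≤ M * (x2 - x1) ^ α / α :=
    frac_bound hα hh hM h12
  have gint : IntervalIntegrable
      (fun t => ((x1 - t) ^ (α - 1) - (x2 - t) ^ (α - 1)) * M) volume 0 x1 :=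
    ((frac_intable' hα x1 0 x1).sub (frac_intable' hα x2 0 x1)).mul_const M
  have hane : ∀ᵐ t ∂(volume.restrict (Set.uIoc (0:ℝ) x1)), t ≠ x1 :=
    ae_restrict_of_ae (compl_mem_ae_iff.mpr (measure_singleton x1))
  have hane' : ∀ᵐ t ∂(volume.restrict (Icc (0:ℝ) x1)), t ≠ x1 :=
    ae_restrict_of_ae (compl_mem_ae_iff.mpr (measure_singleton x1))
  have hfirst : ‖∫ t in (0:ℝ)..x1, ((x2 - t) ^ (α - 1) - (x1 - t) ^ (α - 1)) * h t‖ ≤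
      |∫ t in (0:ℝ)..x1, ((x1 - t) ^ (α - 1) - (x2 - t) ^ (α - 1)) * M| := by
    apply intervalIntegral.norm_integral_le_abs_of_norm_le _ gint
    filter_upwards [ae_restrict_mem measurableSet_uIoc, hane] with t ht hne
    rw [Set.uIoc_of_le h0] at ht
    have ht1 : t < x1 := lt_of_le_of_ne ht.2 hne
    have hx1t : (0:ℝ) < x1 - t := by linarith
    have hle : (x2 - t) ^ (α - 1) ≤ (x1 - t) ^ (α - 1) :=
      Real.rpow_le_rpow_of_nonpos hx1t (by linarith) (by linarith)
    have hnn2 : (0:ℝ) ≤ (x2 - t) ^ (α - 1) := Real.rpow_nonneg (by linarith) _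
    rw [Real.norm_eq_abs, abs_mul, abs_of_nonpos (by linarith), neg_sub]
    exact mul_le_mul_of_nonneg_left (hM t) (by linarith)
  have hGnonneg : 0 ≤ ∫ t in (0:ℝ)..x1, ((x1 - t) ^ (α - 1) - (x2 - t) ^ (α - 1)) * M := by
    apply intervalIntegral.integral_nonneg_of_ae_restrict h0
    filter_upwards [ae_restrict_mem measurableSet_Icc, hane'] with t ht hne
    have ht1 : t < x1 := lt_of_le_of_ne ht.2 hne
    have hx1t : (0:ℝ) < x1 - t := by linarith
    have hle : (x2 - t) ^ (α - 1) ≤ (x1 - t) ^ (α - 1) :=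
      Real.rpow_le_rpow_of_nonpos hx1t (by linarith) (by linarith)
    exact mul_nonneg (by linarith) hM0
  have hGval : (∫ t in (0:ℝ)..x1, ((x1 - t) ^ (α - 1) - (x2 - t) ^ (α - 1)) * M) =
      M * ((x1 ^ α - x2 ^ α + (x2 - x1) ^ α) / α) := by
    rw [intervalIntegral.integral_mul_const,
      intervalIntegral.integral_sub (frac_intable' hα x1 0 x1) (frac_intable' hα x2 0 x1),
      frac_const_int hα, frac_const_int hα, sub_self, sub_zero, sub_zero,
      Real.zero_rpow hα.ne']
    ring
  have hx1x2 : x1 ^ α ≤ x2 ^ α := Real.rpow_le_rpow h0 h12 hα.le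
  have hfirst' : |∫ t in (0:ℝ)..x1, ((x2 - t) ^ (α - 1) - (x1 - t) ^ (α - 1)) * h t| ≤
      M * (x2 - x1) ^ α / α := by
    rw [← Real.norm_eq_abs]
    refine hfirst.trans ?_
    rw [abs_of_nonneg hGnonneg, hGval]
    rw [mul_div_assoc]
    gcongr
    linarith
  calc |(∫ t in (0:ℝ)..x2, (x2 - t) ^ (α - 1) * h t) -
      ∫ t in (0:ℝ)..x1, (x1 - t) ^ (α - 1) * h t|
      = |(∫ t in (0:ℝ)..x1, ((x2 - t) ^ (α - 1) - (x1 - t) ^ (α - 1)) * h t) +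
          ∫ t in x1..x2, (x2 - t) ^ (α - 1) * h t| := by
        rw [hsplit, ← hdiff]; congr 1; ring
    _ ≤ _ + _ := abs_add_le _ _
    _ ≤ M * (x2 - x1) ^ α / α + M * (x2 - x1) ^ α / α := add_le_add hfirst' hmid
    _ = 2 * M / α * (x2 - x1) ^ α := by ring

lemma frac_continuousOn {α : ℝ} (hα : 0 < α) (hα1 : α < 1) {h : ℝ → ℝ} (hh : Continuous h)
    {M : ℝ} (hM : ∀ t, |h t| ≤ M) :
    ContinuousOn (fun x => ∫ t in (0:ℝ)..x, (x - t) ^ (α - 1) * h t) (Icc 0 1) := by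
  intro x0 hx0
  have key : ∀ x ∈ Icc (0:ℝ) 1, dist (∫ t in (0:ℝ)..x, (x - t) ^ (α - 1) * h t)
      (∫ t in (0:ℝ)..x0, (x0 - t) ^ (α - 1) * h t) ≤ 2 * M / α * |x - x0| ^ α := by
    intro x hx
    rcases le_total x0 x with hc | hc
    · rw [Real.dist_eq, abs_of_nonneg (sub_nonneg.2 hc)]
      exact frac_holder hα hα1 hh hM hx0.1 hc
    · rw [Real.dist_eq, abs_sub_comm,
        show |x - x0| = x0 - x by rw [abs_sub_comm, abs_of_nonneg (sub_nonneg.2 hc)]]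
      exact frac_holder hα hα1 hh hM hx.1 hc
  have h1 : Tendsto (fun x : ℝ => 2 * M / α * |x - x0| ^ α)
      (nhdsWithin x0 (Icc 0 1)) (nhds 0) := by
    have t1 : Tendsto (fun x : ℝ => |x - x0|) (nhdsWithin x0 (Icc 0 1)) (nhds 0) := by
      have hc : Continuous fun x : ℝ => |x - x0| := (continuous_id.sub continuous_const).abs
      have := (hc.continuousWithinAt (s := Icc 0 1) (x := x0)).tendsto
      simpa using this
    have t2 : ContinuousAt (fun d : ℝ => d ^ α) 0 :=
      Real.continuousAt_rpow_const 0 α (Or.inr hα.le)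
    have t3 := t2.tendsto.comp t1
    rw [Real.zero_rpow hα.ne'] at t3
    have t4 := t3.const_mul (2 * M / α)
    simpa using t4
  rw [ContinuousWithinAt, tendsto_iff_dist_tendsto_zero]
  refine squeeze_zero' ?_ ?_ h1
  · exact Eventually.of_forall fun x => dist_nonneg
  · exact eventually_of_mem self_mem_nhdsWithin key


theorem stmt_6 (α : ℝ) (hα0 : 0 < α) (hα1 : α < 1)
    (k : ℝ → ℝ → ℝ) (hk : ContinuousOn (fun p : ℝ × ℝ => k p.1 p.2) (Icc 0 1 ×ˢ Icc 0 1))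
    (g : ℝ → ℝ) (hg : ContinuousOn g (Icc 0 1))
    (f : ℝ → ℝ → ℝ) (hf : ContinuousOn (fun p : ℝ × ℝ => f p.1 p.2) (Icc 0 1 ×ˢ univ))
    (Lf : ℝ) (hLf : 0 < Lf)
    (hfLip : ∀ x ∈ Icc (0:ℝ) 1, ∀ y₁ y₂ : ℝ, |f x y₂ - f x y₁| ≤ Lf * |y₂ - y₁|)
    (Mk : ℝ) (hMk : ∀ x ∈ Icc (0:ℝ) 1, ∀ t ∈ Icc (0:ℝ) 1, |k x t| ≤ Mk)
    (hcontr : Lf * Mk < Real.Gamma (α + 1)) :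
    ∃ y : ℝ → ℝ, (ContinuousOn y (Icc 0 1) ∧
        ∀ x ∈ Icc (0:ℝ) 1, y x = g x + ∫ t in (0:ℝ)..x, (x - t) ^ (α - 1) *
          ((1 / Real.Gamma α) * ∫ z in (0:ℝ)..1, k t z * f z (y z))) ∧
      ∀ y' : ℝ → ℝ, (ContinuousOn y' (Icc 0 1) ∧
        ∀ x ∈ Icc (0:ℝ) 1, y' x = g x + ∫ t in (0:ℝ)..x, (x - t) ^ (α - 1) *
          ((1 / Real.Gamma α) * ∫ z in (0:ℝ)..1, k t z * f z (y' z))) →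
      ∀ x ∈ Icc (0:ℝ) 1, y' x = y x := by
  have hMk0 : 0 ≤ Mk :=
    le_trans (abs_nonneg _) (hMk 0 ⟨le_refl 0, zero_le_one⟩ 0 ⟨le_refl 0, zero_le_one⟩)
  have hΓα : 0 < Real.Gamma α := Real.Gamma_pos_of_pos hα0
  have hΓα1 : 0 < Real.Gamma (α + 1) := Real.Gamma_pos_of_pos (by linarith)
  have hΓeq : Real.Gamma (α + 1) = α * Real.Gamma α := Real.Gamma_add_one hα0.ne'
  set c : ℝ := 1 / Real.Gamma α with hc
  have hc0 : 0 < c := by rw [hc]; positivity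
  -- projection onto [0,1]
  set π : ℝ → ℝ := fun t => (Set.projIcc (0:ℝ) 1 zero_le_one t : ℝ) with hπdef
  have hπcont : Continuous π := continuous_subtype_val.comp continuous_projIcc
  have hπmem : ∀ t, π t ∈ Icc (0:ℝ) 1 := fun t => (Set.projIcc (0:ℝ) 1 zero_le_one t).2
  have hπeq : ∀ t ∈ Icc (0:ℝ) 1, π t = t := fun t ht => by
    rw [hπdef]; simp only [Set.projIcc_of_mem zero_le_one ht]
  -- extended kernel and nonlinearity
  set K : ℝ → ℝ → ℝ := fun t z => k (π t) (π z) with hKdef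
  have hKcont : Continuous fun p : ℝ × ℝ => K p.1 p.2 :=
    hk.comp_continuous ((hπcont.comp continuous_fst).prodMk (hπcont.comp continuous_snd))
      (fun p => ⟨hπmem _, hπmem _⟩)
  set F : ℝ → ℝ → ℝ := fun z y => f (π z) y with hFdef
  have hFcont : Continuous fun p : ℝ × ℝ => F p.1 p.2 :=
    hf.comp_continuous ((hπcont.comp continuous_fst).prodMk continuous_snd)
      (fun p => ⟨hπmem _, mem_univ _⟩)
  have hKb : ∀ t z, |K t z| ≤ Mk := fun t z => hMk _ (hπmem t) _ (hπmem z)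
  have hFlip : ∀ z y₁ y₂, |F z y₂ - F z y₁| ≤ Lf * |y₂ - y₁| := fun z => hfLip _ (hπmem z)
  -- extension of continuous maps on Icc
  have hextc : ∀ u : C(Icc (0:ℝ) 1, ℝ), Continuous (IccExtend zero_le_one ⇑u) :=
    fun u => u.continuous.Icc_extend'
  -- the inner integral operator
  set Φ : C(Icc (0:ℝ) 1, ℝ) → ℝ → ℝ :=
    fun u t => ∫ z in (0:ℝ)..1, K t z * F z (IccExtend zero_le_one ⇑u z) with hΦdef
  have hΦcont : ∀ u, Continuous (Φ u) := by
    intro u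
    apply intervalIntegral.continuous_parametric_intervalIntegral_of_continuous'
    show Continuous fun p : ℝ × ℝ => K p.1 p.2 * F p.2 (IccExtend zero_le_one ⇑u p.2)
    exact hKcont.mul (hFcont.comp (continuous_snd.prodMk ((hextc u).comp continuous_snd)))
  have hΦbdd : ∀ u : C(Icc (0:ℝ) 1, ℝ), ∃ N : ℝ, 0 ≤ N ∧ ∀ t, |Φ u t| ≤ N := by
    intro u
    obtain ⟨C, hC⟩ := isCompact_Icc.exists_bound_of_continuousOn
      (s := Icc (0:ℝ) 1)
      (((hFcont.comp (continuous_id.prodMk (hextc u)))).continuousOn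
        (f := fun z => F z (IccExtend zero_le_one ⇑u z)))
    refine ⟨Mk * max C 0, mul_nonneg hMk0 (le_max_right _ _), fun t => ?_⟩
    have hb := intervalIntegral.norm_integral_le_of_norm_le_const
      (C := Mk * max C 0) (a := (0:ℝ)) (b := 1)
      (f := fun z => K t z * F z (IccExtend zero_le_one ⇑u z)) ?_
    · simpa using hb
    · intro z hz
      rw [Set.uIoc_of_le zero_le_one] at hz
      have hz' : z ∈ Icc (0:ℝ) 1 := ⟨hz.1.le, hz.2⟩
      rw [Real.norm_eq_abs, abs_mul]
      exact mul_le_mul (hKb t z) (le_trans (hC z hz') (le_max_left _ _)) (abs_nonneg _) hMk0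
  choose N hN0 hN using hΦbdd
  -- the outer (fractional) integral operator
  set J : C(Icc (0:ℝ) 1, ℝ) → ℝ → ℝ :=
    fun u x => ∫ t in (0:ℝ)..x, (x - t) ^ (α - 1) * Φ u t with hJdef
  have hWc : ∀ u : C(Icc (0:ℝ) 1, ℝ), ContinuousOn (fun x => g x + c * J u x) (Icc 0 1) :=
    fun u => hg.add (continuousOn_const.mul
      (frac_continuousOn hα0 hα1 (hΦcont u) (hN u)))
  set T : C(Icc (0:ℝ) 1, ℝ) → C(Icc (0:ℝ) 1, ℝ) :=
    fun u => ⟨(Icc (0:ℝ) 1).restrict (fun x => g x + c * J u x), (hWc u).restrict⟩ with hTdef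
  have hTapp : ∀ u (x : Icc (0:ℝ) 1), T u x = g x.1 + c * J u x.1 := fun u x => rfl
  -- Lipschitz estimate
  have hΦd : ∀ u v : C(Icc (0:ℝ) 1, ℝ), ∀ t,
      |Φ u t - Φ v t| ≤ Mk * (Lf * dist u v) := by
    intro u v t
    have hiu : IntervalIntegrable
        (fun z => K t z * F z (IccExtend zero_le_one ⇑u z)) volume 0 1 :=
      ((hKcont.comp (continuous_const.prodMk continuous_id)).mul
        (hFcont.comp (continuous_id.prodMk (hextc u)))).intervalIntegrable 0 1
    have hiv : IntervalIntegrable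
        (fun z => K t z * F z (IccExtend zero_le_one ⇑v z)) volume 0 1 :=
      ((hKcont.comp (continuous_const.prodMk continuous_id)).mul
        (hFcont.comp (continuous_id.prodMk (hextc v)))).intervalIntegrable 0 1
    have heq : Φ u t - Φ v t = ∫ z in (0:ℝ)..1,
        (K t z * F z (IccExtend zero_le_one ⇑u z) -
         K t z * F z (IccExtend zero_le_one ⇑v z)) := by
      rw [hΦdef]; exact (intervalIntegral.integral_sub hiu hiv).symm
    rw [heq, ← Real.norm_eq_abs]
    have hb := intervalIntegral.norm_integral_le_of_norm_le_const
      (C := Mk * (Lf * dist u v)) (a := (0:ℝ)) (b := 1)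
      (f := fun z => K t z * F z (IccExtend zero_le_one ⇑u z) -
        K t z * F z (IccExtend zero_le_one ⇑v z)) ?_
    · simpa using hb
    · intro z hz
      show ‖K t z * F z (IccExtend zero_le_one ⇑u z) -
        K t z * F z (IccExtend zero_le_one ⇑v z)‖ ≤ Mk * (Lf * dist u v)
      rw [← mul_sub, Real.norm_eq_abs, abs_mul]
      have h1 : |F z (IccExtend zero_le_one ⇑u z) - F z (IccExtend zero_le_one ⇑v z)| ≤
          Lf * dist u v := by
        refine le_trans (hFlip z _ _) ?_
        apply mul_le_mul_of_nonneg_left _ hLf.le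
        have : IccExtend zero_le_one ⇑u z - IccExtend zero_le_one ⇑v z =
            u (projIcc 0 1 zero_le_one z) - v (projIcc 0 1 zero_le_one z) := rfl
        rw [this, ← Real.dist_eq]
        exact ContinuousMap.dist_apply_le_dist _
      exact mul_le_mul (hKb t z) h1 (abs_nonneg _) hMk0
  have hTlip : ∀ u v : C(Icc (0:ℝ) 1, ℝ), ∀ x : Icc (0:ℝ) 1,
      dist (T u x) (T v x) ≤ (Lf * Mk / Real.Gamma (α + 1)) * dist u v := by
    intro u v x
    have hd0 : (0:ℝ) ≤ dist u v := dist_nonneg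
    have hJd : |J u x.1 - J v x.1| ≤ Mk * (Lf * dist u v) / α := by
      have heq : J u x.1 - J v x.1 =
          ∫ t in (0:ℝ)..x.1, (x.1 - t) ^ (α - 1) * (Φ u t - Φ v t) := by
        rw [hJdef, ← intervalIntegral.integral_sub
          (frac_intable hα0 (hΦcont u) x.1 0 x.1) (frac_intable hα0 (hΦcont v) x.1 0 x.1)]
        congr 1; ext t; ring
      rw [heq]
      have hb := frac_bound hα0 ((hΦcont u).sub (hΦcont v))
        (M := Mk * (Lf * dist u v)) (hΦd u v) x.2.1
      refine hb.trans ?_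
      rw [sub_zero]
      have hxα : x.1 ^ α ≤ 1 := Real.rpow_le_one x.2.1 x.2.2 hα0.le
      have hnum : Mk * (Lf * dist u v) * x.1 ^ α ≤ Mk * (Lf * dist u v) := by
        nlinarith [mul_nonneg hMk0 (mul_nonneg hLf.le hd0),
          Real.rpow_nonneg x.2.1 α]
      exact (div_le_div_iff_of_pos_right hα0).mpr hnum
    rw [hTapp, hTapp, Real.dist_eq]
    have heq2 : g x.1 + c * J u x.1 - (g x.1 + c * J v x.1) =
        c * (J u x.1 - J v x.1) := by ring
    rw [heq2, abs_mul, abs_of_pos hc0]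
    calc c * |J u x.1 - J v x.1| ≤ c * (Mk * (Lf * dist u v) / α) :=
          mul_le_mul_of_nonneg_left hJd hc0.le
      _ = (Lf * Mk / Real.Gamma (α + 1)) * dist u v := by
          rw [hc, hΓeq]; field_simp
  -- contraction
  set κ : NNReal := Real.toNNReal (Lf * Mk / Real.Gamma (α + 1)) with hκ
  have hκnn : 0 ≤ Lf * Mk / Real.Gamma (α + 1) :=
    div_nonneg (mul_nonneg hLf.le hMk0) hΓα1.le
  have hκcoe : (κ : ℝ) = Lf * Mk / Real.Gamma (α + 1) := Real.coe_toNNReal _ hκnn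
  have hκ1 : κ < 1 := by
    rw [hκ, ← Real.toNNReal_one]
    exact (Real.toNNReal_lt_toNNReal_iff one_pos).mpr ((div_lt_one hΓα1).mpr hcontr)
  have hcontraT : ContractingWith κ T := by
    refine ⟨hκ1, LipschitzWith.of_dist_le_mul fun u v => ?_⟩
    rw [ContinuousMap.dist_le (mul_nonneg (by exact_mod_cast κ.2) dist_nonneg)]
    intro x
    calc dist (T u x) (T v x) ≤ (Lf * Mk / Real.Gamma (α + 1)) * dist u v := hTlip u v x
      _ = (κ : ℝ) * dist u v := by rw [hκcoe]
  -- fixed point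
  have : Nonempty C(Icc (0:ℝ) 1, ℝ) := ⟨ContinuousMap.const _ 0⟩
  set u0 : C(Icc (0:ℝ) 1, ℝ) := ContractingWith.fixedPoint T hcontraT with hu0
  have hfix : T u0 = u0 := hcontraT.fixedPoint_isFixedPt
  set y : ℝ → ℝ := IccExtend zero_le_one ⇑u0 with hy
  -- congruence: rewriting the equation's integrals via Φ and J
  have hinner : ∀ (u : C(Icc (0:ℝ) 1, ℝ)) (w : ℝ → ℝ),
      (∀ z ∈ Icc (0:ℝ) 1, w z = IccExtend zero_le_one ⇑u z) →
      ∀ t ∈ Icc (0:ℝ) 1, (∫ z in (0:ℝ)..1, k t z * f z (w z)) = Φ u t := by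
    intro u w hw t ht
    rw [hΦdef]
    apply intervalIntegral.integral_congr
    intro z hz
    rw [Set.uIcc_of_le zero_le_one] at hz
    show k t z * f z (w z) = K t z * F z (IccExtend zero_le_one ⇑u z)
    rw [hw z hz, hKdef, hFdef]
    simp only [hπeq t ht, hπeq z hz]
  have houter : ∀ (u : C(Icc (0:ℝ) 1, ℝ)) (w : ℝ → ℝ),
      (∀ z ∈ Icc (0:ℝ) 1, w z = IccExtend zero_le_one ⇑u z) →
      ∀ x ∈ Icc (0:ℝ) 1,
      (∫ t in (0:ℝ)..x, (x - t) ^ (α - 1) * (c * ∫ z in (0:ℝ)..1, k t z * f z (w z))) =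
        c * J u x := by
    intro u w hw x hx
    have hcongr : (∫ t in (0:ℝ)..x, (x - t) ^ (α - 1) *
        (c * ∫ z in (0:ℝ)..1, k t z * f z (w z))) =
        ∫ t in (0:ℝ)..x, c * ((x - t) ^ (α - 1) * Φ u t) := by
      apply intervalIntegral.integral_congr
      intro t ht
      rw [Set.uIcc_of_le hx.1] at ht
      show (x - t) ^ (α - 1) * (c * ∫ z in (0:ℝ)..1, k t z * f z (w z)) =
        c * ((x - t) ^ (α - 1) * Φ u t)
      rw [hinner u w hw t ⟨ht.1, le_trans ht.2 hx.2⟩]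
      ring
    rw [hcongr, intervalIntegral.integral_const_mul, hJdef]
  have hyeq : ∀ x ∈ Icc (0:ℝ) 1, y x = g x + ∫ t in (0:ℝ)..x, (x - t) ^ (α - 1) *
      (c * ∫ z in (0:ℝ)..1, k t z * f z (y z)) := by
    intro x hx
    rw [houter u0 y (fun z hz => rfl) x hx]
    have h1 : y x = u0 ⟨x, hx⟩ := IccExtend_of_mem zero_le_one (⇑u0) hx
    rw [h1]
    conv_lhs => rw [← hfix]
    exact hTapp u0 ⟨x, hx⟩
  refine ⟨y, ⟨(hextc u0).continuousOn, hyeq⟩, ?_⟩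
  rintro y' ⟨hy'c, hy'eq⟩ x hx
  set u' : C(Icc (0:ℝ) 1, ℝ) := ⟨(Icc (0:ℝ) 1).restrict y', hy'c.restrict⟩ with hu'
  have hw' : ∀ z ∈ Icc (0:ℝ) 1, y' z = IccExtend zero_le_one ⇑u' z := by
    intro z hz
    rw [IccExtend_of_mem zero_le_one (⇑u') hz]
    rfl
  have hfix' : T u' = u' := by
    apply ContinuousMap.ext
    intro x'
    rw [hTapp]
    have h2 := hy'eq x'.1 x'.2
    rw [houter u' y' hw' x'.1 x'.2] at h2
    exact h2.symm
  have huu : u' = u0 := hcontraT.fixedPoint_unique hfix'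
  calc y' x = u' ⟨x, hx⟩ := rfl
    _ = u0 ⟨x, hx⟩ := by rw [huu]
    _ = y x := (IccExtend_of_mem zero_le_one (⇑u0) hx).symm
end

section
/- Let 0 < ν ≤ 1 and suppose u: (0,1] → ℝ admits a generalized Taylor expansion u(x) = Σ_{i=0}^{N} c_i x^{iν} + R_N(x) with remainder bounded by |R_N(x)| ≤ (M / Γ((N+1)ν+1)) x^{(N+1)ν} where M = sup_{x∈(0,1]} |D^{(N+1)ν} u(x)|. Then the best L²_w approximation û_N of u in span{x^{iν} : 0 ≤ i ≤ N} with weight w(x) = x^{ν-1} satisfies ‖u - û_N‖_{L²_w} ≤ M / (Γ((N+1)ν+1) √((2N+3)ν)). -/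
open MeasureTheory intervalIntegral Set Finset

theorem stmt_8 (ν : ℝ) (hν0 : 0 < ν) (hν1 : ν ≤ 1) (N : ℕ)
    (u R : ℝ → ℝ) (c : ℕ → ℝ) (M : ℝ) (hM : 0 ≤ M)
    (hu : ∀ x ∈ Ioc (0:ℝ) 1, u x = ∑ i ∈ range (N + 1), c i * x ^ ((i : ℝ) * ν) + R x)
    (hR : ∀ x ∈ Ioc (0:ℝ) 1,
      |R x| ≤ M / Real.Gamma ((N + 1) * ν + 1) * x ^ (((N : ℝ) + 1) * ν))
    (a : ℕ → ℝ)
    (hbest : ∀ b : ℕ → ℝ,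
      (∫ x in (0:ℝ)..1, (u x - ∑ i ∈ range (N + 1), a i * x ^ ((i : ℝ) * ν)) ^ 2 * x ^ (ν - 1)) ≤
      ∫ x in (0:ℝ)..1, (u x - ∑ i ∈ range (N + 1), b i * x ^ ((i : ℝ) * ν)) ^ 2 * x ^ (ν - 1)) :
    Real.sqrt (∫ x in (0:ℝ)..1,
        (u x - ∑ i ∈ range (N + 1), a i * x ^ ((i : ℝ) * ν)) ^ 2 * x ^ (ν - 1)) ≤
      M / (Real.Gamma ((N + 1) * ν + 1) * Real.sqrt ((2 * N + 3) * ν)) := by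
  have hΓ : 0 < Real.Gamma ((N + 1) * ν + 1) :=
    Real.Gamma_pos_of_pos (by positivity)
  set K : ℝ := M / Real.Gamma ((N + 1) * ν + 1) with hKdef
  have hK0 : 0 ≤ K := div_nonneg hM hΓ.le
  set r : ℝ := (2 * N + 3) * ν - 1 with hrdef
  have ht : (0:ℝ) < (2 * N + 3) * ν := by positivity
  have hr : (-1:ℝ) < r := by simp only [hrdef]; linarith
  have hr1 : r + 1 = (2 * N + 3) * ν := by ring
  -- integrability of the dominating function
  have hgint : IntegrableOn (fun x : ℝ => K ^ 2 * x ^ r) (Ioc (0:ℝ) 1) :=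
    ((intervalIntegral.intervalIntegrable_rpow' hr).1).const_mul _
  -- bound the integral with coefficients c
  have hIc : (∫ x in (0:ℝ)..1,
      (u x - ∑ i ∈ range (N + 1), c i * x ^ ((i : ℝ) * ν)) ^ 2 * x ^ (ν - 1)) ≤
      K ^ 2 / ((2 * N + 3) * ν) := by
    rw [intervalIntegral.integral_of_le zero_le_one]
    have hmono : (∫ x in Ioc (0:ℝ) 1,
        (u x - ∑ i ∈ range (N + 1), c i * x ^ ((i : ℝ) * ν)) ^ 2 * x ^ (ν - 1)) ≤
        ∫ x in Ioc (0:ℝ) 1, K ^ 2 * x ^ r := by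
      apply integral_mono_of_nonneg
      · filter_upwards [ae_restrict_mem measurableSet_Ioc] with x hx
        have hx0 : 0 < x := hx.1
        positivity
      · exact hgint
      · filter_upwards [ae_restrict_mem measurableSet_Ioc] with x hx
        have hx0 : 0 < x := hx.1
        have h1 : u x - ∑ i ∈ range (N + 1), c i * x ^ ((i : ℝ) * ν) = R x := by
          rw [hu x hx]; ring
        rw [h1]
        have h2 : (R x) ^ 2 ≤ (K * x ^ (((N : ℝ) + 1) * ν)) ^ 2 := by
          rw [← sq_abs (R x)]
          apply pow_le_pow_left₀ (abs_nonneg _) (hR x hx)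
        have h3 : (R x) ^ 2 * x ^ (ν - 1) ≤
            (K * x ^ (((N : ℝ) + 1) * ν)) ^ 2 * x ^ (ν - 1) := by
          apply mul_le_mul_of_nonneg_right h2 (Real.rpow_nonneg hx0.le _)
        refine h3.trans_eq ?_
        rw [mul_pow, ← Real.rpow_natCast (x ^ (((N : ℝ) + 1) * ν)) 2,
          ← Real.rpow_mul hx0.le, mul_assoc, ← Real.rpow_add hx0]
        congr 1
        push_cast [hrdef]
        ring
    refine hmono.trans_eq ?_
    rw [MeasureTheory.integral_const_mul, ← intervalIntegral.integral_of_le zero_le_one,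
      integral_rpow (Or.inl hr)]
    rw [Real.one_rpow, Real.zero_rpow (by linarith), hr1]
    ring
  have hIa : (∫ x in (0:ℝ)..1,
      (u x - ∑ i ∈ range (N + 1), a i * x ^ ((i : ℝ) * ν)) ^ 2 * x ^ (ν - 1)) ≤
      K ^ 2 / ((2 * N + 3) * ν) := (hbest c).trans hIc
  calc Real.sqrt (∫ x in (0:ℝ)..1,
        (u x - ∑ i ∈ range (N + 1), a i * x ^ ((i : ℝ) * ν)) ^ 2 * x ^ (ν - 1))
      ≤ Real.sqrt (K ^ 2 / ((2 * N + 3) * ν)) := Real.sqrt_le_sqrt hIa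
    _ = K / Real.sqrt ((2 * N + 3) * ν) := by
        rw [Real.sqrt_div (sq_nonneg K), Real.sqrt_sq hK0]
    _ = M / (Real.Gamma ((N + 1) * ν + 1) * Real.sqrt ((2 * N + 3) * ν)) := by
        rw [hKdef, div_div]
end
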